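/- arXiv:2106.02487 — 4 statements merged into one kernel-verified Lean document; each statement's English description precedes it below -/
import Mathlib

section
/- Let 0 < a₁, a₂ < 1/α with a₁ ≠ a₂ and r ∈ ℕ, r ≥ 1. Then (a₁/a₂)·((1 − αa₁)/(1 − αa₂))^r ≠ (a₁/a₂)·((1 − αa₁)/(1 − αa₂))^{2r}, and consequently a₁(1 − αa₁)^{2r} + a₂(1 − αa₂)^{2r} divided by a₁(1 − αa₁)^r + a₂(1 − αa₂)^r, multiplied by (1 − αa₂)^r, differs from (1 − αa₂)^{2r}. -/
lemma aux_pow_ne_one {x : ℝ} (hx : 0 < x) (hx1 : x ≠ 1) {n : ℕ} (hn : n ≠ 0) :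
    x ^ n ≠ 1 := by
  intro h
  rcases lt_trichotomy x 1 with h1 | h1 | h1
  · have := pow_lt_one₀ (le_of_lt hx) h1 hn
    linarith
  · exact hx1 h1
  · have := one_lt_pow₀ h1 hn
    linarith

/-- Nondegeneracy inequality for the FOM divergence counterexample. -/
theorem fom_counterexample_nondegeneracy (α a₁ a₂ : ℝ) (r : ℕ)
    (hα : 0 < α) (ha₁ : 0 < a₁) (ha₂ : 0 < a₂)
    (ha₁' : a₁ < 1 / α) (ha₂' : a₂ < 1 / α) (hne : a₁ ≠ a₂) (hr : 1 ≤ r) :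
    (a₁ / a₂) * ((1 - α * a₁) / (1 - α * a₂)) ^ r ≠
      (a₁ / a₂) * ((1 - α * a₁) / (1 - α * a₂)) ^ (2 * r) ∧
    (a₁ * (1 - α * a₁) ^ (2 * r) + a₂ * (1 - α * a₂) ^ (2 * r)) /
        (a₁ * (1 - α * a₁) ^ r + a₂ * (1 - α * a₂) ^ r) * (1 - α * a₂) ^ r ≠
      (1 - α * a₂) ^ (2 * r) := by
  have hb₁ : 0 < 1 - α * a₁ := by
    have : α * a₁ < α * (1 / α) := by exact mul_lt_mul_of_pos_left ha₁' hα
    rw [mul_one_div, div_self (ne_of_gt hα)] at this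
    linarith
  have hb₂ : 0 < 1 - α * a₂ := by
    have : α * a₂ < α * (1 / α) := by exact mul_lt_mul_of_pos_left ha₂' hα
    rw [mul_one_div, div_self (ne_of_gt hα)] at this
    linarith
  have hbne : (1 - α * a₁) ≠ (1 - α * a₂) := by
    intro h
    apply hne
    have : α * a₁ = α * a₂ := by linarith
    exact mul_left_cancel₀ (ne_of_gt hα) this
  have hr0 : r ≠ 0 := by omega
  have hxpos : 0 < (1 - α * a₁) / (1 - α * a₂) := div_pos hb₁ hb₂
  have hx1 : (1 - α * a₁) / (1 - α * a₂) ≠ 1 := by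
    intro h
    have := (div_eq_iff (ne_of_gt hb₂)).mp h
    apply hbne; linarith
  have ht1 : ((1 - α * a₁) / (1 - α * a₂)) ^ r ≠ 1 := aux_pow_ne_one hxpos hx1 hr0
  have htpos : 0 < ((1 - α * a₁) / (1 - α * a₂)) ^ r := pow_pos hxpos r
  constructor
  · intro h
    have h2 : ((1 - α * a₁) / (1 - α * a₂)) ^ r =
        ((1 - α * a₁) / (1 - α * a₂)) ^ (2 * r) :=
      mul_left_cancel₀ (ne_of_gt (div_pos ha₁ ha₂)) h
    rw [two_mul, pow_add] at h2
    have : (1:ℝ) = ((1 - α * a₁) / (1 - α * a₂)) ^ r := by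
      have := mul_left_cancel₀ (ne_of_gt htpos) (by linarith [h2] : ((1 - α * a₁) / (1 - α * a₂)) ^ r * 1 = ((1 - α * a₁) / (1 - α * a₂)) ^ r * ((1 - α * a₁) / (1 - α * a₂)) ^ r)
      exact this
    exact ht1 this.symm
  · intro h
    have hD : 0 < a₁ * (1 - α * a₁) ^ r + a₂ * (1 - α * a₂) ^ r := by
      positivity
    rw [div_mul_eq_mul_div, div_eq_iff (ne_of_gt hD)] at h
    have hp1 : (0:ℝ) < (1 - α * a₁) ^ r := pow_pos hb₁ r
    have hp2 : (0:ℝ) < (1 - α * a₂) ^ r := pow_pos hb₂ r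
    have key : (1 - α * a₁) ^ r = (1 - α * a₂) ^ r := by
      rw [two_mul, pow_add, pow_add] at h
      have h3 : a₁ * ((1 - α * a₁) ^ r * (1 - α * a₂) ^ r) * (1 - α * a₁) ^ r =
          a₁ * ((1 - α * a₁) ^ r * (1 - α * a₂) ^ r) * (1 - α * a₂) ^ r := by ring_nf; ring_nf at h; linarith
      exact mul_left_cancel₀ (by positivity) h3
    exact aux_pow_ne_one hxpos hx1 hr0 (by
      rw [div_pow, key, div_self (ne_of_gt hp2)])
end

section
/- Let a > 0, A > 0, and define f: ℝ → ℝ piecewise in z = |x − c| (for a fixed center c): f(x) = (a/2)z² if z ≤ A; f(x) = −(a/6)(z−A)³ + (a/2)(z−A)² + aAz − (a/2)A² if A < z ≤ A+1; f(x) = ((a/2) + aA)z − a/6 − (a/2)A² − (a/2)A if z > A+1. Then f is twice continuously differentiable on ℝ, with f''(x) = a for z ≤ A, f''(x) = −az + a + aA for A < z ≤ A+1, and f''(x) = 0 for z > A+1; in particular 0 ≤ f''(x) ≤ a everywhere, so f' is a-Lipschitz and f is convex with unique global minimum at x = c. -/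
/-!
Put `y = x - c` and `w z = (z - A)₊³ - (z - A - 1)₊³`. Since `w` vanishes on `z ≤ A`, at most one
of `w y`, `w (-y)` is nonzero, and `f x = a/2 y² - a/6 (w y + w (-y))` for every `x`. Truncated
powers `t₊ⁿ⁺¹` with `n ≥ 1` are differentiable with derivative `(n + 1) t₊ⁿ`, so `f` is `C²` and
`f'' x = a - a · clamp₍₀,₁₎ (|y| - A) ∈ [0, a]`; the mean value theorem and the second-derivative
test give the Lipschitz bound and convexity. Finally `w z < 3 (z - A)² ≤ 3 z²` for `z > A ≥ 0`, so
`f x > 0 = f c` whenever `x ≠ c`.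
-/

noncomputable def truncPow (n : ℕ) (t : ℝ) : ℝ := max t 0 ^ n

lemma truncPow_of_nonpos {n : ℕ} (hn : n ≠ 0) {t : ℝ} (ht : t ≤ 0) : truncPow n t = 0 := by
  simp [truncPow, max_eq_right ht, hn]

lemma truncPow_of_nonneg (n : ℕ) {t : ℝ} (ht : 0 ≤ t) : truncPow n t = t ^ n := by
  simp [truncPow, max_eq_left ht]

@[fun_prop]
lemma continuous_truncPow (n : ℕ) : Continuous (truncPow n) := by
  unfold truncPow; fun_prop

lemma hasDerivAt_truncPow_succ {n : ℕ} (hn : n ≠ 0) (t : ℝ) :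
    HasDerivAt (truncPow (n + 1)) ((n + 1) * truncPow n t) t := by
  -- off the kink the function is locally `0` or `s ^ (n + 1)`; at `0` continuity of both sides
  -- suffices
  refine hasDerivAt_of_hasDerivAt_of_ne' (f := truncPow (n + 1))
    (g := fun s => (n + 1) * truncPow n s) (x := 0) (fun s hs => ?_) (by fun_prop) (by fun_prop) t
  rcases hs.lt_or_gt with hs | hs
  · rw [truncPow_of_nonpos hn hs.le, mul_zero]
    refine (hasDerivAt_const s 0).congr_of_eventuallyEq ?_
    filter_upwards [Iio_mem_nhds hs] with u hu
    exact truncPow_of_nonpos (Nat.succ_ne_zero n) (le_of_lt hu)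
  · rw [truncPow_of_nonneg n hs.le]
    refine ((hasDerivAt_pow (n + 1) s).congr_of_eventuallyEq ?_).congr_deriv (by push_cast; ring)
    filter_upwards [Ioi_mem_nhds hs] with u hu
    exact truncPow_of_nonneg _ (le_of_lt hu)

lemma add_comp_neg_eq_comp_abs {g : ℝ → ℝ} (hg : ∀ y ≤ 0, g y = 0) (y : ℝ) :
    g y + g (-y) = g |y| := by
  rcases le_total 0 y with hy | hy
  · rw [hg (-y) (neg_nonpos.mpr hy), abs_of_nonneg hy, add_zero]
  · rw [hg y hy, abs_of_nonpos hy, zero_add]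

noncomputable def capWindow (n : ℕ) (A z : ℝ) : ℝ :=
  truncPow n (z - A) - truncPow n (z - A - 1)

lemma hasDerivAt_capWindow_succ {n : ℕ} (hn : n ≠ 0) (A z : ℝ) :
    HasDerivAt (capWindow (n + 1) A) ((n + 1) * capWindow n A z) z := by
  have h := ((hasDerivAt_truncPow_succ hn (z - A)).comp_sub_const z A).sub
    ((hasDerivAt_truncPow_succ hn (z - (A + 1))).comp_sub_const z (A + 1))
  simp only [← sub_sub] at h
  exact h.congr_deriv (by rw [capWindow]; ring)

section capWindow

variable {n : ℕ} {A z : ℝ}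

lemma capWindow_of_le (hn : n ≠ 0) (hz : z ≤ A) : capWindow n A z = 0 := by
  rw [capWindow, truncPow_of_nonpos hn (by linarith), truncPow_of_nonpos hn (by linarith), sub_zero]

lemma capWindow_of_mem_Icc (hn : n ≠ 0) (h₁ : A ≤ z) (h₂ : z ≤ A + 1) :
    capWindow n A z = (z - A) ^ n := by
  rw [capWindow, truncPow_of_nonneg n (by linarith), truncPow_of_nonpos hn (by linarith), sub_zero]

lemma capWindow_of_ge (hz : A + 1 ≤ z) :
    capWindow n A z = (z - A) ^ n - (z - A - 1) ^ n := by
  rw [capWindow, truncPow_of_nonneg n (by linarith), truncPow_of_nonneg n (by linarith)]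

lemma capWindow_one_mem_Icc : capWindow 1 A z ∈ Set.Icc 0 1 := by
  rcases le_total z A with h₁ | h₁
  · simp [capWindow_of_le one_ne_zero h₁]
  rcases le_total z (A + 1) with h₂ | h₂
  · rw [capWindow_of_mem_Icc one_ne_zero h₁ h₂]
    constructor <;> linarith
  · rw [capWindow_of_ge h₂]
    norm_num

lemma capWindow_three_lt_three_mul_sq (hz : A < z) : capWindow 3 A z < 3 * (z - A) ^ 2 := by
  rcases le_total z (A + 1) with h | h
  · rw [capWindow_of_mem_Icc three_ne_zero hz.le h]
    nlinarith [pow_pos (sub_pos.mpr hz) 2]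
  · rw [capWindow_of_ge h]
    nlinarith

lemma capWindow_add_comp_neg (hn : n ≠ 0) (hA : 0 ≤ A) (y : ℝ) :
    capWindow n A y + capWindow n A (-y) = capWindow n A |y| :=
  add_comp_neg_eq_comp_abs (fun _ hy => capWindow_of_le hn (hy.trans hA)) y

end capWindow

lemma contDiff_two_of_hasDerivAt_deriv {f f'' : ℝ → ℝ} (hf : Differentiable ℝ f)
    (hf' : ∀ x, HasDerivAt (deriv f) (f'' x) x) (hf'' : Continuous f'') : ContDiff ℝ 2 f := by
  rw [show (2 : WithTop ℕ∞) = 1 + 1 by norm_num]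
  refine contDiff_succ_iff_deriv.mpr ⟨hf, by simp, ?_⟩
  have hd' : deriv (deriv f) = f'' := funext fun x => (hf' x).deriv
  exact contDiff_one_iff_deriv.mpr ⟨fun x => (hf' x).differentiableAt, hd' ▸ hf''⟩

namespace CappedQuadratic

variable (a A : ℝ)

/-- The capped quadratic centred at `0`, written with truncated powers so that it is visibly
`C²`. -/
noncomputable def profile (y : ℝ) : ℝ :=
  a / 2 * y ^ 2 - a / 6 * (capWindow 3 A y + capWindow 3 A (-y))

noncomputable def profileDeriv (y : ℝ) : ℝ :=
  a * y - a / 2 * (capWindow 2 A y - capWindow 2 A (-y))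

noncomputable def profileDeriv2 (y : ℝ) : ℝ :=
  a - a * (capWindow 1 A y + capWindow 1 A (-y))

lemma hasDerivAt_profile (y : ℝ) : HasDerivAt (profile a A) (profileDeriv a A y) y := by
  have hpos := hasDerivAt_capWindow_succ two_ne_zero A y
  have hneg := (hasDerivAt_capWindow_succ two_ne_zero A (-y)).comp y (hasDerivAt_neg y)
  have h := ((hasDerivAt_pow 2 y).const_mul (a / 2)).sub ((hpos.add hneg).const_mul (a / 6))
  exact h.congr_deriv (by rw [profileDeriv]; push_cast; ring)

lemma hasDerivAt_profileDeriv (y : ℝ) :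
    HasDerivAt (profileDeriv a A) (profileDeriv2 a A y) y := by
  have hpos := hasDerivAt_capWindow_succ one_ne_zero A y
  have hneg := (hasDerivAt_capWindow_succ one_ne_zero A (-y)).comp y (hasDerivAt_neg y)
  have h := ((hasDerivAt_id y).const_mul a).sub ((hpos.sub hneg).const_mul (a / 2))
  exact h.congr_deriv (by rw [profileDeriv2]; push_cast; ring)

@[fun_prop]
lemma continuous_profileDeriv2 : Continuous (profileDeriv2 a A) := by
  unfold profileDeriv2 capWindow; fun_prop

variable {a A}

lemma profile_eq_of_nonneg (hA : 0 ≤ A) (y : ℝ) :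
    profile a A y = a / 2 * |y| ^ 2 - a / 6 * capWindow 3 A |y| := by
  rw [profile, capWindow_add_comp_neg three_ne_zero hA, sq_abs]

lemma profileDeriv2_eq_of_nonneg (hA : 0 ≤ A) (y : ℝ) :
    profileDeriv2 a A y = a - a * capWindow 1 A |y| := by
  rw [profileDeriv2, capWindow_add_comp_neg one_ne_zero hA]

lemma profileDeriv2_mem_Icc (ha : 0 ≤ a) (hA : 0 ≤ A) (y : ℝ) :
    profileDeriv2 a A y ∈ Set.Icc 0 a := by
  obtain ⟨h₀, h₁⟩ := capWindow_one_mem_Icc (A := A) (z := |y|)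
  rw [profileDeriv2_eq_of_nonneg hA]
  constructor <;> nlinarith

lemma profile_zero (hA : 0 ≤ A) : profile a A 0 = 0 := by
  simp [profile_eq_of_nonneg hA, capWindow_of_le three_ne_zero hA]

lemma profile_pos (ha : 0 < a) (hA : 0 ≤ A) {y : ℝ} (hy : y ≠ 0) : 0 < profile a A y := by
  have hz : 0 < |y| := abs_pos.mpr hy
  rw [profile_eq_of_nonneg hA]
  rcases le_or_gt |y| A with h | h
  · rw [capWindow_of_le three_ne_zero h, mul_zero, sub_zero]
    positivity
  · have hcap := capWindow_three_lt_three_mul_sq h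
    have hsq : (|y| - A) ^ 2 ≤ |y| ^ 2 := pow_le_pow_left₀ (by linarith) (by linarith) 2
    nlinarith

lemma profile_eq_piecewise (hA : 0 ≤ A) (y : ℝ) :
    profile a A y =
      if |y| ≤ A then a / 2 * |y| ^ 2
      else if |y| ≤ A + 1 then
        -(a / 6) * (|y| - A) ^ 3 + a / 2 * (|y| - A) ^ 2 + a * A * |y| - a / 2 * A ^ 2
      else (a / 2 + a * A) * |y| - a / 6 - a / 2 * A ^ 2 - a / 2 * A := by
  rw [profile_eq_of_nonneg hA]
  split_ifs with h₁ h₂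
  · rw [capWindow_of_le three_ne_zero h₁]; ring
  · rw [capWindow_of_mem_Icc three_ne_zero (not_le.mp h₁).le h₂]; ring
  · rw [capWindow_of_ge (not_le.mp h₂).le]; ring

end CappedQuadratic

open CappedQuadratic

/-- The cubic-capped quadratic building block of the FOM divergence
counterexample is C², with the stated second derivative, which lies in [0, a];
hence f' is a-Lipschitz, f is convex, and f has a unique global minimum at c. -/
theorem capped_quadratic_properties (a A c : ℝ) (ha : 0 < a) (hA : 0 < A)
    (f : ℝ → ℝ)
    (hf : f = fun x =>
      if |x - c| ≤ A then a / 2 * |x - c| ^ 2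
      else if |x - c| ≤ A + 1 then
        -(a / 6) * (|x - c| - A) ^ 3 + a / 2 * (|x - c| - A) ^ 2
          + a * A * |x - c| - a / 2 * A ^ 2
      else (a / 2 + a * A) * |x - c| - a / 6 - a / 2 * A ^ 2 - a / 2 * A) :
    ContDiff ℝ 2 f ∧
    (∀ x, |x - c| ≤ A → deriv (deriv f) x = a) ∧
    (∀ x, A < |x - c| → |x - c| ≤ A + 1 →
      deriv (deriv f) x = -a * |x - c| + a + a * A) ∧
    (∀ x, A + 1 < |x - c| → deriv (deriv f) x = 0) ∧
    (∀ x, 0 ≤ deriv (deriv f) x ∧ deriv (deriv f) x ≤ a) ∧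
    (∀ x y, |deriv f x - deriv f y| ≤ a * |x - y|) ∧
    ConvexOn ℝ Set.univ f ∧
    (∀ x, f c ≤ f x) ∧ (∀ x, f x = f c → x = c) := by
  have hprof : f = fun x => profile a A (x - c) := by
    simp only [hf, profile_eq_piecewise hA.le]
  have hD : ∀ x, HasDerivAt f (profileDeriv a A (x - c)) x := fun x =>
    hprof ▸ (hasDerivAt_profile a A (x - c)).comp_sub_const x c
  have hD' : ∀ x, HasDerivAt (deriv f) (profileDeriv2 a A (x - c)) x := fun x => by
    simpa only [funext fun x => (hD x).deriv] using
      (hasDerivAt_profileDeriv a A (x - c)).comp_sub_const x c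
  have hD2 : ∀ x, deriv (deriv f) x = a - a * capWindow 1 A |x - c| := fun x => by
    rw [(hD' x).deriv, profileDeriv2_eq_of_nonneg hA.le]
  have hbound : ∀ x, deriv (deriv f) x ∈ Set.Icc 0 a := fun x =>
    (hD' x).deriv ▸ profileDeriv2_mem_Icc ha.le hA.le (x - c)
  have hmin : ∀ x, x ≠ c → f c < f x := fun x hx => by
    simpa [hprof, profile_zero hA.le] using profile_pos ha hA.le (sub_ne_zero.mpr hx)
  refine ⟨contDiff_two_of_hasDerivAt_deriv
    (fun x => (hD x).differentiableAt) hD' (by fun_prop), fun x h => ?_, fun x h₁ h₂ => ?_,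
    fun x h => ?_, hbound, fun x y => ?_, ?_, fun x => ?_, fun x hx => ?_⟩
  · rw [hD2, capWindow_of_le one_ne_zero h]; ring
  · rw [hD2, capWindow_of_mem_Icc one_ne_zero h₁.le h₂]; ring
  · rw [hD2, capWindow_of_ge h.le]; ring
  · simpa [Real.norm_eq_abs] using Convex.norm_image_sub_le_of_norm_deriv_le
      (fun z _ => (hD' z).differentiableAt) (fun z _ => abs_le.mpr
        ⟨by linarith [(hbound z).1, ha], (hbound z).2⟩)
      convex_univ (Set.mem_univ y) (Set.mem_univ x)
  · refine convexOn_univ_of_deriv2_nonneg (fun x => (hD x).differentiableAt)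
      (fun x => (hD' x).differentiableAt) fun x => ?_
    rw [Function.iterate_succ_apply', Function.iterate_one]
    exact (hbound x).1
  · rcases eq_or_ne x c with rfl | hx
    · rfl
    · exact (hmin x hx).le
  · by_contra hne
    exact (hmin x hne).ne' hx
end

section
/- Let g(q) = ((1/q − 1)D² + V²)^{2/(1−2ε)} (C_det + C_rnd q) for q ∈ (0,1], with D², V², C_det, C_rnd > 0 and 0 < ε < 1/2. Then the derivative of g at q = 1 is positive if and only if D² < (C_rnd/((2/(1−2ε))(C_det + C_rnd))) V². -/
/-! With `α = 2 / (1 - 2ε)`, the product and chain rules give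
`g'(1) = V² ^ (α - 1) * (C_rnd V² - α D² (C_det + C_rnd))`, whose sign is that of the
second factor since `V² > 0`. -/

lemma hasDerivAt_inv_sub_one_mul_add_rpow_one (D V α : ℝ) (hV : V ≠ 0) :
    HasDerivAt (fun q : ℝ => ((1 / q - 1) * D + V) ^ α) (-(α * D * V ^ (α - 1))) 1 := by
  have hinv : HasDerivAt (fun q : ℝ => 1 / q) (-1) 1 := by
    simpa using hasDerivAt_inv (one_ne_zero (α := ℝ))
  have hbase : HasDerivAt (fun q : ℝ => (1 / q - 1) * D + V) (-D) 1 := by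
    simpa using ((hinv.sub_const 1).mul_const D).add_const V
  have hbase_one : (1 / (1 : ℝ) - 1) * D + V = V := by norm_num
  convert hbase.rpow_const (p := α) (Or.inl (by rwa [hbase_one])) using 1
  rw [hbase_one]
  ring

lemma hasDerivAt_rpow_mul_affine_one (C R D V α : ℝ) (hV : V ≠ 0) :
    HasDerivAt (fun q : ℝ => ((1 / q - 1) * D + V) ^ α * (C + R * q))
      (V ^ (α - 1) * (R * V - α * D * (C + R))) 1 := by
  have haffine : HasDerivAt (fun q : ℝ => C + R * q) R 1 := by
    simpa using ((hasDerivAt_id (1 : ℝ)).const_mul R).const_add C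
  refine ((hasDerivAt_inv_sub_one_mul_add_rpow_one D V α hV).fun_mul haffine).congr_deriv ?_
  have hsplit : V ^ α = V ^ (α - 1) * V := by
    rw [← Real.rpow_add_one hV, sub_add_cancel]
  simp only [one_div_one, sub_self, zero_mul, zero_add, mul_one, hsplit]
  ring

lemma rpow_sub_one_mul_sub_pos_iff {C R D V α : ℝ} (hV : 0 < V) (hden : 0 < α * (C + R)) :
    0 < V ^ (α - 1) * (R * V - α * D * (C + R)) ↔ D < R / (α * (C + R)) * V := by
  rw [mul_pos_iff_of_pos_left (Real.rpow_pos_of_pos hV _), sub_pos, div_mul_eq_mul_div,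
    lt_div_iff₀ hden]
  constructor <;> intro h <;> linarith

theorem ufom_time_derivative_at_one_general (Cdet Crnd V2 D2 ε : ℝ)
    (hCdet : 0 < Cdet) (hCrnd : 0 < Crnd) (hV : 0 < V2)
    (hε1 : ε < 1 / 2)
    (g : ℝ → ℝ)
    (hg : g = fun q =>
      ((1 / q - 1) * D2 + V2) ^ ((2 : ℝ) / (1 - 2 * ε)) * (Cdet + Crnd * q)) :
    0 < deriv g 1 ↔ D2 < (Crnd / ((2 / (1 - 2 * ε)) * (Cdet + Crnd))) * V2 := by
  have hexponent : 0 < (2 : ℝ) / (1 - 2 * ε) := div_pos two_pos (by linarith)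
  subst hg
  rw [(hasDerivAt_rpow_mul_affine_one Cdet Crnd D2 V2 _ hV.ne').deriv]
  exact rpow_sub_one_mul_sub_pos_iff hV (by positivity)

/-- The derivative at q = 1 of the expected wall-clock time
g(q) = ((1/q − 1)D² + V²)^{2/(1−2ε)} (C_det + C_rnd q) is positive iff
D² < (C_rnd/((2/(1−2ε))(C_det + C_rnd))) V². -/
theorem ufom_time_derivative_at_one (Cdet Crnd V2 D2 ε : ℝ)
    (hCdet : 0 < Cdet) (hCrnd : 0 < Crnd) (hV : 0 < V2) (hD : 0 < D2)
    (hε0 : 0 < ε) (hε1 : ε < 1 / 2)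
    (g : ℝ → ℝ)
    (hg : g = fun q =>
      ((1 / q - 1) * D2 + V2) ^ ((2 : ℝ) / (1 - 2 * ε)) * (Cdet + Crnd * q)) :
    0 < deriv g 1 ↔ D2 < (Crnd / ((2 / (1 - 2 * ε)) * (Cdet + Crnd))) * V2 :=
  ufom_time_derivative_at_one_general Cdet Crnd V2 D2 ε hCdet hCrnd hV hε1 g hg
end

section
/- Under the same backward recursion, the accumulated difference satisfies: if c_j := b_j − b_r with c_r = 0 and b_{j−1} = b_j − α_j H_jᵀ b_j, then ‖b_0 − b_r‖ ≤ L₁ L₂ Σ_{j=1}^r α_j Π_{j'=j}^r (1 + α_{j'} L₂). -/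
/-!
Each backward step `b ↦ b - α • H† b` enlarges the norm by at most the factor `1 + α L₂`,
so `‖b_j‖ ≤ L₁ ∏_{j < k ≤ r} (1 + α_k L₂)`. The drift `b_0 - b_r` telescopes into the
increments `α_j H_j† b_j`, each of norm at most `α_j L₂ ‖b_j‖`. This gives the bound with
products over `j < k ≤ r`; the factor `k = j` of the stated products is at least `1`.
-/

open Finset

theorem le_prod_Ioc_mul_of_le_mul_succ {R : Type*} [CommSemiring R] [PartialOrder R]
    [IsOrderedRing R] {u c : ℕ → R} (hc : ∀ k, 0 ≤ c k) {m n : ℕ} (hmn : m ≤ n)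
    (h : ∀ j ∈ Ico m n, u j ≤ c (j + 1) * u (j + 1)) :
    u m ≤ (∏ k ∈ Ioc m n, c k) * u n := by
  induction n, hmn using Nat.le_induction with
  | base => simp
  | succ n hmn ih =>
    calc u m ≤ (∏ k ∈ Ioc m n, c k) * u n :=
          ih fun j hj ↦ h j (Ico_subset_Ico_right n.le_succ hj)
      _ ≤ (∏ k ∈ Ioc m n, c k) * (c (n + 1) * u (n + 1)) :=
          mul_le_mul_of_nonneg_left (h n (by simp [hmn])) (prod_nonneg fun k _ ↦ hc k)
      _ = (∏ k ∈ Ioc m (n + 1), c k) * u (n + 1) := by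
          rw [prod_Ioc_succ_top hmn, mul_assoc]

section NormedSpace

variable {E : Type*} [SeminormedAddCommGroup E] [NormedSpace ℝ E]

theorem norm_smul_apply_le_of_opNorm_le {T : E →L[ℝ] E} {L a : ℝ} (hT : ‖T‖ ≤ L)
    (ha : 0 ≤ a) (x : E) : ‖a • T x‖ ≤ a * L * ‖x‖ := by
  rw [norm_smul, Real.norm_of_nonneg ha, mul_assoc]
  exact mul_le_mul_of_nonneg_left (T.le_of_opNorm_le hT x) ha

theorem norm_sub_smul_apply_le_of_opNorm_le {T : E →L[ℝ] E} {L a : ℝ} (hT : ‖T‖ ≤ L)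
    (ha : 0 ≤ a) (x : E) : ‖x - a • T x‖ ≤ (1 + a * L) * ‖x‖ := by
  calc ‖x - a • T x‖ ≤ ‖x‖ + ‖a • T x‖ := norm_sub_le _ _
    _ ≤ ‖x‖ + a * L * ‖x‖ := by gcongr; exact norm_smul_apply_le_of_opNorm_le hT ha x
    _ = (1 + a * L) * ‖x‖ := by ring

theorem norm_le_prod_of_backward_step {T : ℕ → E →L[ℝ] E} {L : ℝ} {α : ℕ → ℝ} {b : ℕ → E}
    {r : ℕ} (hT : ∀ j, ‖T j‖ ≤ L) (hα : ∀ j, 0 ≤ α j)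
    (hstep : ∀ j < r, b j = b (j + 1) - α (j + 1) • T (j + 1) (b (j + 1))) {j : ℕ} (hj : j ≤ r) :
    ‖b j‖ ≤ (∏ k ∈ Ioc j r, (1 + α k * L)) * ‖b r‖ := by
  have hL : 0 ≤ L := (norm_nonneg _).trans (hT 0)
  refine le_prod_Ioc_mul_of_le_mul_succ (u := fun j ↦ ‖b j‖)
    (fun k ↦ add_nonneg zero_le_one (mul_nonneg (hα k) hL)) hj fun i hi ↦ ?_
  rw [hstep i (mem_Ico.1 hi).2]
  exact norm_sub_smul_apply_le_of_opNorm_le (hT _) (hα _) _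

theorem dist_le_of_backward_step {T : ℕ → E →L[ℝ] E} {L : ℝ} {α : ℕ → ℝ} {b : ℕ → E}
    {r : ℕ} (hT : ∀ j, ‖T j‖ ≤ L) (hα : ∀ j, 0 ≤ α j)
    (hstep : ∀ j < r, b j = b (j + 1) - α (j + 1) • T (j + 1) (b (j + 1))) :
    dist (b 0) (b r) ≤ ‖b r‖ * L * ∑ j ∈ Icc 1 r, α j * ∏ k ∈ Ioc j r, (1 + α k * L) := by
  have hL : 0 ≤ L := (norm_nonneg _).trans (hT 0)
  have hincr : ∀ i < r, dist (b i) (b (i + 1)) ≤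
      ‖b r‖ * L * (α (i + 1) * ∏ k ∈ Ioc (i + 1) r, (1 + α k * L)) := fun i hi ↦
    calc dist (b i) (b (i + 1)) = ‖α (i + 1) • T (i + 1) (b (i + 1))‖ := by
          rw [dist_comm, dist_eq_norm, hstep i hi, sub_sub_cancel]
      _ ≤ α (i + 1) * L * ‖b (i + 1)‖ := norm_smul_apply_le_of_opNorm_le (hT _) (hα _) _
      _ ≤ α (i + 1) * L * ((∏ k ∈ Ioc (i + 1) r, (1 + α k * L)) * ‖b r‖) := by
          gcongr
          · exact mul_nonneg (hα _) hL
          · exact norm_le_prod_of_backward_step hT hα hstep hi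
      _ = ‖b r‖ * L * (α (i + 1) * ∏ k ∈ Ioc (i + 1) r, (1 + α k * L)) := by ring
  calc dist (b 0) (b r) ≤ ∑ i ∈ range r, dist (b i) (b (i + 1)) := dist_le_range_sum_dist b r
    _ ≤ ∑ i ∈ range r, ‖b r‖ * L * (α (i + 1) * ∏ k ∈ Ioc (i + 1) r, (1 + α k * L)) :=
        sum_le_sum fun i hi ↦ hincr i (mem_range.1 hi)
    _ = ‖b r‖ * L * ∑ j ∈ Icc 1 r, α j * ∏ k ∈ Ioc j r, (1 + α k * L) := by
        rw [← mul_sum, range_eq_Ico, sum_Ico_add' (fun j ↦ α j * ∏ k ∈ Ioc j r, (1 + α k * L))]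
        rfl

end NormedSpace

theorem adjoint_backprop_drift_bound_general {p : ℕ} (r : ℕ) (L₁ L₂ : ℝ)
    (α : ℕ → ℝ) (hα : ∀ j, 0 < α j)
    (H : ℕ → EuclideanSpace ℝ (Fin p) →L[ℝ] EuclideanSpace ℝ (Fin p))
    (hH : ∀ j, ‖H j‖ ≤ L₂)
    (b : ℕ → EuclideanSpace ℝ (Fin p))
    (hbr : ‖b r‖ ≤ L₁)
    (hrec : ∀ j, 1 ≤ j → j ≤ r →
      b (j - 1) = b j - α j • (ContinuousLinearMap.adjoint (H j)) (b j)) :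
    ‖b 0 - b r‖ ≤ L₁ * L₂ * ∑ j ∈ Finset.Icc 1 r, α j * ∏ j' ∈ Finset.Icc j r, (1 + α j' * L₂) := by
  set T := fun j ↦ ContinuousLinearMap.adjoint (H j)
  have hL₂ : 0 ≤ L₂ := (norm_nonneg _).trans (hH 0)
  have hT : ∀ j, ‖T j‖ ≤ L₂ := fun j ↦ by simpa [T] using hH j
  have hstep : ∀ j < r, b j = b (j + 1) - α (j + 1) • T (j + 1) (b (j + 1)) :=
    fun j hj ↦ by simpa using hrec (j + 1) (by omega) hj
  have hfactor : ∀ k, 1 ≤ 1 + α k * L₂ := fun k ↦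
    le_add_of_nonneg_right (mul_nonneg (hα k).le hL₂)
  have hfactor_nonneg : ∀ k, 0 ≤ 1 + α k * L₂ := fun k ↦ zero_le_one.trans (hfactor k)
  have hL₁ : 0 ≤ L₁ := (norm_nonneg _).trans hbr
  calc ‖b 0 - b r‖ = dist (b 0) (b r) := (dist_eq_norm _ _).symm
    _ ≤ ‖b r‖ * L₂ * ∑ j ∈ Icc 1 r, α j * ∏ k ∈ Ioc j r, (1 + α k * L₂) :=
        dist_le_of_backward_step hT (fun j ↦ (hα j).le) hstep
    _ ≤ L₁ * L₂ * ∑ j ∈ Icc 1 r, α j * ∏ k ∈ Icc j r, (1 + α k * L₂) := by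
        gcongr with j
        · exact sum_nonneg fun j _ ↦
            mul_nonneg (hα j).le (prod_nonneg fun k _ ↦ hfactor_nonneg k)
        · exact (hα j).le
        · exact fun k _ ↦ hfactor_nonneg k
        · exact fun k _ _ ↦ hfactor k
        · exact Ioc_subset_Icc_self

/-- The drift of the fully back-propagated adjoint from the last-step
gradient satisfies ‖b_0 − b_r‖ ≤ L₁ L₂ Σ_{j=1}^r α_j Π_{j'=j}^r (1 + α_{j'} L₂). -/
theorem adjoint_backprop_drift_bound {p : ℕ} (r : ℕ) (L₁ L₂ : ℝ)
    (hL₁ : 0 < L₁) (hL₂ : 0 < L₂)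
    (α : ℕ → ℝ) (hα : ∀ j, 0 < α j)
    (H : ℕ → EuclideanSpace ℝ (Fin p) →L[ℝ] EuclideanSpace ℝ (Fin p))
    (hH : ∀ j, ‖H j‖ ≤ L₂)
    (b : ℕ → EuclideanSpace ℝ (Fin p))
    (hbr : ‖b r‖ ≤ L₁)
    (hrec : ∀ j, 1 ≤ j → j ≤ r →
      b (j - 1) = b j - α j • (ContinuousLinearMap.adjoint (H j)) (b j)) :
    ‖b 0 - b r‖ ≤ L₁ * L₂ * ∑ j ∈ Finset.Icc 1 r, α j * ∏ j' ∈ Finset.Icc j r, (1 + α j' * L₂) :=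
  adjoint_backprop_drift_bound_general r L₁ L₂ α hα H hH b hbr hrec
end
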